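/- arXiv:2312.13387 — 3 statements merged into one kernel-verified Lean document; each statement's English description precedes it below -/
import Mathlib

section
/- Suppose the outcomes Y_i have finite support 𝒴 = {y₁, …, y_k} and μ is the counting measure on 𝒴. Let 𝒳 ⊆ ℝ and Θ₀ ⊆ Θ ⊆ ℝ^p be compact sets, suppose f_θ(y|x) > 0 on 𝒳 × Θ₀ × 𝒴, and suppose that for each y ∈ 𝒴 the map (x, θ) ↦ √f_θ(y|x) is continuous on 𝒳 × Θ₀ and has continuous first and second partial derivatives there. Then for any sequence (X_i) of random variables taking values in 𝒳, any θ in the interior of Θ₀, and any h ∈ ℝ^p, the family {f_θ(·|·) : θ ∈ Θ₀} satisfies ∑_{i=1}^n E[D_{θ,h/√n}(X_i)] → 0 as n → ∞; that is, the family is S-DQM at θ. -/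
/-!
Since the outcome space is finite, `D_{θ,t}(x)` is a finite sum of squared first-order Taylor
remainders of `s ↦ √f_s(y|x)` at `θ`, because `½ tᵀu_θ √f_θ` is the derivative of `√f` in the
direction `t`. The second `θ`-derivative of `√f` is jointly continuous on `𝒳 × int Θ₀`, hence
bounded on `𝒳 × B̄(θ, r)`; so each remainder is `O(‖t‖²)` uniformly in `x` and
`D_{θ,t} ≤ C ‖t‖⁴`. With `t = h/√n` the `n` expectations add up to at most `C ‖h‖⁴ / n`.
-/

open Filter MeasureTheory

/-- The directional derivative `h^T u_θ(y|x)` of `θ ↦ log f_θ(y|x)` in direction `h`,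
where `u_θ(y|x) = ∂ log f_θ(y|x)/∂θ` is the conditional score. -/
noncomputable def scoreDir {p : ℕ} {Y : Type*} (f : (Fin p → ℝ) → ℝ → Y → ℝ)
    (θ h : Fin p → ℝ) (x : ℝ) (y : Y) : ℝ :=
  fderiv ℝ (fun t => Real.log (f t x y)) θ h

/-- `D_{θ,h}(x)` for counting measure on a finite outcome space `Y`:
`∑_{y∈𝒴} (√f_{θ+h}(y|x) − √f_θ(y|x) − (1/2) h^T u_θ(y|x) √f_θ(y|x))²`. -/
noncomputable def DqmFin {p : ℕ} {Y : Type*} [Fintype Y]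
    (f : (Fin p → ℝ) → ℝ → Y → ℝ) (θ h : Fin p → ℝ) (x : ℝ) : ℝ :=
  ∑ y : Y, (Real.sqrt (f (θ + h) x y) - Real.sqrt (f θ x y) -
    (1 / 2) * scoreDir f θ h x y * Real.sqrt (f θ x y)) ^ 2

open Topology Metric Set

section SlicesOfProducts

variable {𝕜 X E G : Type*} [NontriviallyNormedField 𝕜] [NormedAddCommGroup X] [NormedSpace 𝕜 X]
  [NormedAddCommGroup E] [NormedSpace 𝕜 E] [NormedAddCommGroup G] [NormedSpace 𝕜 G]
  {F : X × E → G} {K : Set X} {U : Set E} {n : WithTop ℕ∞}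

theorem ContDiffOn.contDiffAt_snd (hF : ContDiffOn 𝕜 n F (K ×ˢ U)) {x : X} (hx : x ∈ K) {s : E}
    (hs : s ∈ interior U) : ContDiffAt 𝕜 n (fun s => F (x, s)) s :=
  (hF.comp (contDiffOn_const.prodMk contDiffOn_id) fun _ hs => ⟨hx, hs⟩).contDiffAt
    (mem_interior_iff_mem_nhds.mp hs)

/-- No unique differentiability is needed on `K`: only the open `E`-direction is differentiated. -/
theorem ContDiffOn.fderiv_snd_of_isOpen {m : WithTop ℕ∞} (hF : ContDiffOn 𝕜 n F (K ×ˢ U))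
    (hU : IsOpen U) (hmn : m + 1 ≤ n) :
    ContDiffOn 𝕜 m (fun q : X × E => fderiv 𝕜 (fun y => F (q.1, y)) q.2) (K ×ˢ U) := by
  intro q hq
  have hmaps : MapsTo (fun p : (X × E) × E => (p.1.1, p.2)) ((K ×ˢ U) ×ˢ U) (K ×ˢ U) :=
    fun _ hp => ⟨hp.1.1, hp.2⟩
  have hunc : ContDiffWithinAt 𝕜 n (Function.uncurry fun (q : X × E) (y : E) => F (q.1, y))
      ((K ×ˢ U) ×ˢ U) (q, q.2) :=
    (hF.comp (by fun_prop) hmaps) _ ⟨hq, hq.2⟩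
  refine (hunc.fderivWithin contDiffWithinAt_snd hU.uniqueDiffOn hmn hq
    fun _ hp => hp.2).congr (fun p hp => ?_) ?_
  · exact (fderivWithin_of_isOpen hU hp.2).symm
  · exact (fderivWithin_of_isOpen hU hq.2).symm

end SlicesOfProducts

section TaylorRemainder

variable {X E G : Type*} [NormedAddCommGroup X] [NormedSpace ℝ X] [NormedAddCommGroup E]
  [NormedSpace ℝ E] [NormedAddCommGroup G] [NormedSpace ℝ G]

theorem norm_sub_sub_fderiv_le_of_norm_fderiv_fderiv_le {g : E → G} {θ : E} {r C : ℝ}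
    (hg : ∀ s ∈ closedBall θ r, ContDiffAt ℝ 2 g s)
    (hC : ∀ s ∈ closedBall θ r, ‖fderiv ℝ (fderiv ℝ g) s‖ ≤ C) {t : E} (ht : ‖t‖ ≤ r) :
    ‖g (θ + t) - g θ - fderiv ℝ g θ t‖ ≤ C * ‖t‖ ^ 2 := by
  have hθ : θ ∈ closedBall θ r := mem_closedBall_self ((norm_nonneg t).trans ht)
  have hC0 : 0 ≤ C := (norm_nonneg (fderiv ℝ (fderiv ℝ g) θ)).trans (hC θ hθ)
  have hsub : closedBall θ ‖t‖ ⊆ closedBall θ r := closedBall_subset_closedBall ht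
  have hlip : ∀ s ∈ closedBall θ ‖t‖, ‖fderiv ℝ g s - fderiv ℝ g θ‖ ≤ C * ‖t‖ := by
    intro s hs
    calc ‖fderiv ℝ g s - fderiv ℝ g θ‖ ≤ C * ‖s - θ‖ :=
          (convex_closedBall θ r).norm_image_sub_le_of_norm_fderiv_le
            (fun s hs => ((hg s hs).fderiv_right (m := 1) le_rfl).differentiableAt one_ne_zero)
            hC hθ (hsub hs)
      _ ≤ C * ‖t‖ := by gcongr; rwa [← dist_eq_norm, ← mem_closedBall]
  have hmvt := (convex_closedBall θ ‖t‖).norm_image_sub_le_of_norm_fderiv_le'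
    (fun s hs => (hg s (hsub hs)).differentiableAt two_ne_zero) hlip
    (mem_closedBall_self (norm_nonneg t)) (show θ + t ∈ closedBall θ ‖t‖ by simp)
  rwa [add_sub_cancel_left, mul_assoc, ← sq] at hmvt

theorem exists_norm_sub_sub_fderiv_snd_le [ProperSpace E] {F : X × E → G} {K : Set X}
    {U : Set E} (hK : IsCompact K) (hF : ContDiffOn ℝ 2 F (K ×ˢ U)) {θ : E} {r : ℝ}
    (hr : closedBall θ r ⊆ interior U) :
    ∃ C, ∀ x ∈ K, ∀ t : E, ‖t‖ ≤ r →
      ‖F (x, θ + t) - F (x, θ) - fderiv ℝ (fun s => F (x, s)) θ t‖ ≤ C * ‖t‖ ^ 2 := by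
  have hFi : ContDiffOn ℝ 2 F (K ×ˢ interior U) := hF.mono (prod_mono subset_rfl interior_subset)
  have h1 : ContDiffOn ℝ 1 (fun q : X × E => fderiv ℝ (fun s => F (q.1, s)) q.2)
      (K ×ˢ interior U) :=
    hFi.fderiv_snd_of_isOpen isOpen_interior (by norm_num)
  have hcont : ContinuousOn
      (fun q : X × E => fderiv ℝ (fun s => fderiv ℝ (fun s' => F (q.1, s')) s) q.2)
      (K ×ˢ interior U) :=
    contDiffOn_zero.mp (h1.fderiv_snd_of_isOpen isOpen_interior (by norm_num))
  obtain ⟨C, hC⟩ := (hK.prod (isCompact_closedBall θ r)).exists_bound_of_continuousOn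
    (E := E →L[ℝ] E →L[ℝ] G) (hcont.mono (prod_mono subset_rfl hr))
  refine ⟨C, fun x hx t ht => norm_sub_sub_fderiv_le_of_norm_fderiv_fderiv_le
    (g := fun s => F (x, s)) (fun s hs => ?_) (fun s hs => hC (x, s) ⟨hx, hs⟩) ht⟩
  exact hF.contDiffAt_snd hx (hr hs)

end TaylorRemainder

theorem fderiv_sqrt_eq_half_mul_fderiv_log {E : Type*} [NormedAddCommGroup E] [NormedSpace ℝ E]
    {φ : E → ℝ} {θ : E} (hpos : ∀ᶠ s in 𝓝 θ, 0 < φ s)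
    (hd : DifferentiableAt ℝ (fun s => √(φ s)) θ) (t : E) :
    fderiv ℝ (fun s => √(φ s)) θ t =
      1 / 2 * fderiv ℝ (fun s => Real.log (φ s)) θ t * √(φ θ) := by
  have hsqrt_pos : 0 < √(φ θ) := Real.sqrt_pos.mpr hpos.self_of_nhds
  have hlog : (fun s => Real.log (φ s)) =ᶠ[𝓝 θ] fun s => 2 * Real.log √(φ s) := by
    filter_upwards [hpos] with s hs
    rw [Real.log_sqrt hs.le]
    ring
  rw [hlog.fderiv_eq, fderiv_const_mul (hd.log hsqrt_pos.ne'), fderiv.log hd hsqrt_pos.ne']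
  simp only [FunLike.coe_smul, Pi.smul_apply, smul_eq_mul]
  field_simp

theorem dqmFin_nonneg {p : ℕ} {Y : Type*} [Fintype Y] (f : (Fin p → ℝ) → ℝ → Y → ℝ)
    (θ t : Fin p → ℝ) (x : ℝ) : 0 ≤ DqmFin f θ t x :=
  Finset.sum_nonneg fun _ _ => sq_nonneg _

theorem exists_dqmFin_le {p : ℕ} {Y : Type*} [Fintype Y] {f : (Fin p → ℝ) → ℝ → Y → ℝ}
    {𝒳 : Set ℝ} {Θ₀ : Set (Fin p → ℝ)} (h𝒳c : IsCompact 𝒳)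
    (hpos : ∀ θ ∈ Θ₀, ∀ x ∈ 𝒳, ∀ y : Y, 0 < f θ x y)
    (hsmooth : ∀ y : Y,
      ContDiffOn ℝ 2 (fun q : ℝ × (Fin p → ℝ) => √(f q.2 q.1 y)) (𝒳 ×ˢ Θ₀))
    {θ : Fin p → ℝ} (hθ : θ ∈ interior Θ₀) :
    ∃ r > 0, ∃ C, ∀ x ∈ 𝒳, ∀ t : Fin p → ℝ, ‖t‖ ≤ r → DqmFin f θ t x ≤ C * ‖t‖ ^ 4 := by
  obtain ⟨r, hr, hball⟩ := nhds_basis_closedBall.mem_iff.mp (isOpen_interior.mem_nhds hθ)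
  choose C hC using fun y => exists_norm_sub_sub_fderiv_snd_le h𝒳c (hsmooth y) hball
  refine ⟨r, hr, ∑ y, C y ^ 2, fun x hx t ht => ?_⟩
  rw [DqmFin, Finset.sum_mul]
  refine Finset.sum_le_sum fun y _ => ?_
  have hd : DifferentiableAt ℝ (fun s => √(f s x y)) θ :=
    ((hsmooth y).contDiffAt_snd hx hθ).differentiableAt two_ne_zero
  have hpos_near : ∀ᶠ s in 𝓝 θ, 0 < f s x y :=
    eventually_of_mem (isOpen_interior.mem_nhds hθ) fun s hs => hpos s (interior_subset hs) x hx y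
  rw [scoreDir, ← fderiv_sqrt_eq_half_mul_fderiv_log hpos_near hd, ← sq_abs, ← Real.norm_eq_abs]
  calc ‖√(f (θ + t) x y) - √(f θ x y) - fderiv ℝ (fun s => √(f s x y)) θ t‖ ^ 2
      ≤ (C y * ‖t‖ ^ 2) ^ 2 := pow_le_pow_left₀ (norm_nonneg _) (hC y x hx t ht) 2
    _ = C y ^ 2 * ‖t‖ ^ 4 := by ring

theorem tendsto_sum_Icc_integral_inv_sqrt_smul {E Ω : Type*} [NormedAddCommGroup E]
    [NormedSpace ℝ E] [MeasurableSpace Ω] (P : Measure Ω) [IsProbabilityMeasure P]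
    (Z : E → ℕ → Ω → ℝ) (hZ0 : ∀ t i ω, 0 ≤ Z t i ω) {r C : ℝ} (hr : 0 < r)
    (hZ : ∀ t, ‖t‖ ≤ r → ∀ i ω, Z t i ω ≤ C * ‖t‖ ^ 4) (h : E) :
    Tendsto (fun n : ℕ => ∑ i ∈ Finset.Icc 1 n, ∫ ω, Z ((√n)⁻¹ • h) i ω ∂P)
      atTop (𝓝 0) := by
  have hnorm : ∀ n : ℕ, ‖(√n)⁻¹ • h‖ = (√n)⁻¹ * ‖h‖ := fun n => by
    rw [norm_smul, norm_inv, Real.norm_of_nonneg (Real.sqrt_nonneg _)]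
  have hsmall : ∀ᶠ n : ℕ in atTop, ‖(√n)⁻¹ • h‖ ≤ r := by
    have := ((tendsto_inv_atTop_zero.comp
      (Real.tendsto_sqrt_atTop.comp tendsto_natCast_atTop_atTop)).mul_const ‖h‖)
    rw [zero_mul] at this
    filter_upwards [this.eventually_le_const hr] with n hn
    rwa [hnorm]
  refine squeeze_zero' (Eventually.of_forall fun n =>
      Finset.sum_nonneg fun i _ => integral_nonneg (hZ0 _ i))
    ?_ (tendsto_const_div_atTop_nhds_zero_nat (C * ‖h‖ ^ 4))
  filter_upwards [hsmall] with n hn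
  have hint : ∀ i, ∫ ω, Z ((√n)⁻¹ • h) i ω ∂P ≤ C * ‖(√n)⁻¹ • h‖ ^ 4 := fun i => by
    simpa using integral_mono_of_nonneg (Eventually.of_forall (hZ0 _ i))
      (integrable_const (μ := P) (C * ‖(√n)⁻¹ • h‖ ^ 4)) (Eventually.of_forall (hZ _ hn i))
  calc ∑ i ∈ Finset.Icc 1 n, ∫ ω, Z ((√n)⁻¹ • h) i ω ∂P
      ≤ n * (C * ‖(√n)⁻¹ • h‖ ^ 4) := by
        simpa using Finset.sum_le_card_nsmul (Finset.Icc 1 n) _ _ fun i _ => hint i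
    _ = C * ‖h‖ ^ 4 / n := by
        rcases n.eq_zero_or_pos with rfl | hn0
        · simp
        have hsq : √(n : ℝ) ^ 4 = (n : ℝ) ^ 2 := by
          rw [show 4 = 2 * 2 from rfl, pow_mul, Real.sq_sqrt n.cast_nonneg]
        rw [hnorm, mul_pow, inv_pow, hsq]
        field_simp

theorem stmt_3_general {p : ℕ} (Y : Type*) [Fintype Y]
    (f : (Fin p → ℝ) → ℝ → Y → ℝ)
    (𝒳 : Set ℝ) (Θ₀ : Set (Fin p → ℝ))
    (h𝒳c : IsCompact 𝒳)
    (hpos : ∀ θ ∈ Θ₀, ∀ x ∈ 𝒳, ∀ y : Y, 0 < f θ x y)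
    (hsmooth : ∀ y : Y,
      ContDiffOn ℝ 2 (fun q : ℝ × (Fin p → ℝ) => Real.sqrt (f q.2 q.1 y)) (𝒳 ×ˢ Θ₀))
    {Ω : Type*} [MeasurableSpace Ω] (P : Measure Ω) [IsProbabilityMeasure P]
    (X : ℕ → Ω → ℝ) (hXin : ∀ i ω, X i ω ∈ 𝒳)
    (θ : Fin p → ℝ) (hθ : θ ∈ interior Θ₀) (h : Fin p → ℝ) :
    Tendsto
      (fun n : ℕ => ∑ i ∈ Finset.Icc 1 n,
        ∫ ω, DqmFin f θ ((Real.sqrt n)⁻¹ • h) (X i ω) ∂P)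
      atTop (nhds 0) := by
  obtain ⟨r, hr, C, hC⟩ := exists_dqmFin_le h𝒳c hpos hsmooth hθ
  exact tendsto_sum_Icc_integral_inv_sqrt_smul P (fun t i ω => DqmFin f θ t (X i ω))
    (fun t _ _ => dqmFin_nonneg f θ t _) hr (fun t ht i ω => hC (X i ω) (hXin i ω) t ht) h

/-- For outcomes with finite support, compact `𝒳 ⊆ ℝ` and compact `Θ₀ ⊆ Θ ⊆ ℝ^p`,
positive densities, and `(x,θ) ↦ √f_θ(y|x)` twice continuously differentiable on
`𝒳 × Θ₀`, for any sequence `(X_i)` of random variables with values in `𝒳`, the family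
is S-DQM at any `θ` in the interior of `Θ₀`:
`∑_{i=1}^n E[D_{θ,h/√n}(X_i)] → 0` for every `h`. -/
theorem stmt_3 {p : ℕ} (Y : Type*) [Fintype Y] [Nonempty Y]
    (f : (Fin p → ℝ) → ℝ → Y → ℝ)
    (𝒳 : Set ℝ) (Θ Θ₀ : Set (Fin p → ℝ)) (hΘ : Θ₀ ⊆ Θ)
    (h𝒳c : IsCompact 𝒳) (hΘ₀c : IsCompact Θ₀)
    (hdens : ∀ θ ∈ Θ₀, ∀ x ∈ 𝒳, ∑ y : Y, f θ x y = 1)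
    (hpos : ∀ θ ∈ Θ₀, ∀ x ∈ 𝒳, ∀ y : Y, 0 < f θ x y)
    (hsmooth : ∀ y : Y,
      ContDiffOn ℝ 2 (fun q : ℝ × (Fin p → ℝ) => Real.sqrt (f q.2 q.1 y)) (𝒳 ×ˢ Θ₀))
    {Ω : Type*} [MeasurableSpace Ω] (P : Measure Ω) [IsProbabilityMeasure P]
    (X : ℕ → Ω → ℝ) (hXm : ∀ i, Measurable (X i)) (hXin : ∀ i ω, X i ω ∈ 𝒳)
    (θ : Fin p → ℝ) (hθ : θ ∈ interior Θ₀) (h : Fin p → ℝ) :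
    Tendsto
      (fun n : ℕ => ∑ i ∈ Finset.Icc 1 n,
        ∫ ω, DqmFin f θ ((Real.sqrt n)⁻¹ • h) (X i ω) ∂P)
      atTop (nhds 0) :=
  stmt_3_general Y f 𝒳 Θ₀ h𝒳c hpos hsmooth P X hXin θ hθ h
end

section
/- Suppose the outcomes take values in a finite set 𝒴 = {y₁, …, y_k}, μ is the counting measure on 𝒴, 𝒳 ⊆ ℝ and Θ₀ ⊆ Θ ⊆ ℝ^p are compact, f_θ(y|x) > 0 on 𝒳 × Θ₀ × 𝒴, and for each y ∈ 𝒴 the map (x, θ) ↦ √f_θ(y|x) is continuous with continuous first and second partial derivatives on 𝒳 × Θ₀. Then for any deterministic sequence (x_i) in 𝒳, any θ in the interior of Θ₀, and any h ∈ ℝ^p, ∑_{i=1}^n D_{θ,h/√n}(x_i) → 0 as n → ∞. -/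
open Filter

/-!
Since `log f = 2 log √f`, the term `(1/2) hᵀu_θ(y|x) √f_θ(y|x)` is the derivative of
`ϑ ↦ √f_ϑ(y|x)` at `θ` in direction `h`, so `D_{θ,h}(x)` is a finite sum of squared first-order
Taylor remainders of these maps. The derivative is continuous on `interior Θ₀ × 𝒳` and `𝒳` is
compact, so by the mean value inequality the remainders are `o(‖h‖)` uniformly in `x ∈ 𝒳`
(expressed along the filter `𝓝 0 ×ˢ 𝓟 𝒳`). Hence `D_{θ,h}(x) = o(‖h‖²)` uniformly, and the `n`
terms with `‖h/√n‖² = ‖h‖²/n` add up to `o(1)`.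
-/

open Topology Asymptotics Set

theorem tendsto_sub_nhds_prod_principal_of_continuousOn {X Y G : Type*} [TopologicalSpace X]
    [TopologicalSpace Y] [SeminormedAddCommGroup G] {Φ : X × Y → G} {U : Set X} {K : Set Y}
    {x₀ : X} (hK : IsCompact K) (hU : U ∈ 𝓝 x₀) (hΦ : ContinuousOn Φ (U ×ˢ K)) :
    Tendsto (fun q => Φ q - Φ (x₀, q.2)) (𝓝 x₀ ×ˢ 𝓟 K) (𝓝 0) := by
  rw [Metric.tendsto_nhds]
  intro ε hε
  have hlocal : ∀ y ∈ K, ∀ᶠ z : X × Y in 𝓝 (x₀, y),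
      z ∈ U ×ˢ K → dist (Φ z) (Φ (x₀, z.2)) < ε := by
    intro y hy
    have hcont : ContinuousWithinAt Φ (U ×ˢ K) (x₀, y) := hΦ _ ⟨mem_of_mem_nhds hU, hy⟩
    have hnear := Metric.tendsto_nhds.1 hcont (ε / 2) (half_pos hε)
    have hbase : Tendsto (fun z : X × Y => (x₀, z.2)) (𝓝[U ×ˢ K] (x₀, y)) (𝓝[U ×ˢ K] (x₀, y)) :=
      tendsto_nhdsWithin_of_tendsto_nhds_of_eventually_within _
        ((continuous_const.prodMk continuous_snd).tendsto' _ _ rfl |>.mono_left nhdsWithin_le_nhds)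
        (eventually_nhdsWithin_of_forall fun z hz => ⟨mem_of_mem_nhds hU, hz.2⟩)
    rw [← eventually_nhdsWithin_iff]
    filter_upwards [hnear, hbase.eventually hnear] with z h₁ h₂
    calc dist (Φ z) (Φ (x₀, z.2)) ≤ dist (Φ z) (Φ (x₀, y)) + dist (Φ (x₀, z.2)) (Φ (x₀, y)) :=
          dist_triangle_right _ _ _
      _ < ε / 2 + ε / 2 := add_lt_add h₁ h₂
      _ = ε := add_halves ε
  rw [eventually_prod_principal_iff]
  filter_upwards [hU, hK.eventually_forall_of_forall_eventually
    (P := fun x y => (x, y) ∈ U ×ˢ K → dist (Φ (x, y)) (Φ (x₀, y)) < ε) hlocal] with x hxU hx y hy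
  simpa [dist_eq_norm] using hx y hy ⟨hxU, hy⟩

section Slice

variable {E F : Type*} [NormedAddCommGroup E] [NormedSpace ℝ E] [NormedAddCommGroup F]
  [NormedSpace ℝ F] {g : E → F → ℝ} {𝒳 : Set F} {Θ₀ : Set E}

theorem contDiffAt_slice (hg : ContDiffOn ℝ 1 (fun q : F × E => g q.2 q.1) (𝒳 ×ˢ Θ₀))
    {x : F} (hx : x ∈ 𝒳) {ϑ : E} (hϑ : ϑ ∈ interior Θ₀) : ContDiffAt ℝ 1 (g · x) ϑ :=
  (hg.comp (contDiff_const.prodMk contDiff_id).contDiffOn fun _ h => ⟨hx, h⟩).contDiffAt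
    (mem_interior_iff_mem_nhds.1 hϑ)

theorem continuousOn_fderiv_slice (hg : ContDiffOn ℝ 1 (fun q : F × E => g q.2 q.1) (𝒳 ×ˢ Θ₀)) :
    ContinuousOn (fun q : E × F => fderiv ℝ (g · q.2) q.1) (interior Θ₀ ×ˢ 𝒳) := by
  intro q₀ hq₀
  have hjoint : ContDiffWithinAt ℝ 1 (fun z : (E × F) × E => g z.2 z.1.2)
      ((interior Θ₀ ×ˢ 𝒳) ×ˢ interior Θ₀) (q₀, q₀.1) :=
    (hg.comp (contDiff_fst.snd.prodMk contDiff_snd).contDiffOn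
      fun z hz => ⟨hz.1.2, interior_subset hz.2⟩).contDiffWithinAt ⟨hq₀, hq₀.1⟩
  have hcont := (hjoint.fderivWithin (f := fun (q : E × F) (ϑ : E) => g ϑ q.2) (m := 0)
    contDiff_fst.contDiffWithinAt isOpen_interior.uniqueDiffOn (by norm_num) hq₀
    fun z hz => hz.1).continuousWithinAt
  refine hcont.congr (fun z hz => ?_) ?_
  · exact (fderivWithin_of_isOpen isOpen_interior hz.1).symm
  · exact (fderivWithin_of_isOpen isOpen_interior hq₀.1).symm

theorem isLittleO_sub_sub_fderiv_slice (h𝒳 : IsCompact 𝒳)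
    (hg : ContDiffOn ℝ 1 (fun q : F × E => g q.2 q.1) (𝒳 ×ˢ Θ₀)) {θ : E} (hθ : θ ∈ interior Θ₀) :
    (fun q : E × F => g (θ + q.1) q.2 - g θ q.2 - fderiv ℝ (g · q.2) θ q.1)
      =o[𝓝 0 ×ˢ 𝓟 𝒳] Prod.fst := by
  set D := fun q : E × F => fderiv ℝ (g · q.2) q.1
  have hD : Tendsto (fun q => D q - D (θ, q.2)) (𝓝 θ ×ˢ 𝓟 𝒳) (𝓝 0) :=
    tendsto_sub_nhds_prod_principal_of_continuousOn h𝒳 (isOpen_interior.mem_nhds hθ)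
      (continuousOn_fderiv_slice hg)
  rw [isLittleO_iff]
  intro ε hε
  have hnear : ∀ᶠ ϑ in 𝓝 θ, ∀ x ∈ 𝒳, ϑ ∈ interior Θ₀ ∧ ‖D (ϑ, x) - D (θ, x)‖ ≤ ε := by
    have hclose := hD.eventually (Metric.closedBall_mem_nhds 0 hε)
    rw [eventually_prod_principal_iff] at hclose
    filter_upwards [hclose, isOpen_interior.mem_nhds hθ] with ϑ h hϑ x hx
    exact ⟨hϑ, by simpa using h x hx⟩
  obtain ⟨r, hr, hball⟩ := Metric.eventually_nhds_iff_ball.1 hnear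
  rw [eventually_prod_principal_iff]
  filter_upwards [Metric.ball_mem_nhds 0 hr] with t ht x hx
  have hderiv : ∀ ϑ ∈ Metric.ball θ r, HasFDerivWithinAt (g · x) (D (ϑ, x)) (Metric.ball θ r) ϑ :=
    fun ϑ hϑ => ((contDiffAt_slice hg hx (hball ϑ hϑ x hx).1).differentiableAt
      one_ne_zero).hasFDerivAt.hasFDerivWithinAt
  have hmvt := (convex_ball θ r).norm_image_sub_le_of_norm_hasFDerivWithin_le' hderiv
    (fun ϑ hϑ => (hball ϑ hϑ x hx).2) (Metric.mem_ball_self hr)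
    (show θ + t ∈ Metric.ball θ r by simpa using ht)
  simpa using hmvt

end Slice

theorem tendsto_sum_Icc_inv_sqrt_smul {E X : Type*} [SeminormedAddCommGroup E] [NormedSpace ℝ E]
    {D : E → X → ℝ} {S : Set X}
    (hD : (fun q : E × X => D q.1 q.2) =o[𝓝 0 ×ˢ 𝓟 S] (fun q => ‖q.1‖ ^ 2))
    {x : ℕ → X} (hx : ∀ i, x i ∈ S) (h : E) :
    Tendsto (fun n : ℕ => ∑ i ∈ Finset.Icc 1 n, D ((√n)⁻¹ • h) (x i)) atTop (𝓝 0) := by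
  rw [Metric.tendsto_nhds]
  intro ε hε
  set c := ε / (‖h‖ ^ 2 + 1)
  have hsmall := hD.def (by positivity : 0 < c)
  rw [eventually_prod_principal_iff] at hsmall
  have hstep : Tendsto (fun n : ℕ => (√n)⁻¹ • h) atTop (𝓝 0) := by
    simpa using (tendsto_inv_atTop_zero.comp
      (Real.tendsto_sqrt_atTop.comp tendsto_natCast_atTop_atTop)).smul_const h
  filter_upwards [hstep.eventually hsmall, eventually_ge_atTop 1] with n hn hn1
  have hn0 : (n : ℝ) ≠ 0 := by positivity
  have hnorm : ‖(√n)⁻¹ • h‖ ^ 2 = ‖h‖ ^ 2 / n := by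
    rw [norm_smul, mul_pow, norm_inv, Real.norm_of_nonneg (Real.sqrt_nonneg _), inv_pow,
      Real.sq_sqrt n.cast_nonneg, inv_mul_eq_div]
  calc dist (∑ i ∈ Finset.Icc 1 n, D ((√n)⁻¹ • h) (x i)) 0
      ≤ ∑ i ∈ Finset.Icc 1 n, ‖D ((√n)⁻¹ • h) (x i)‖ := by
        rw [dist_zero_right]; exact norm_sum_le _ _
    _ ≤ ∑ _i ∈ Finset.Icc 1 n, c * (‖h‖ ^ 2 / n) := by
        refine Finset.sum_le_sum fun i _ => ?_
        simpa [hnorm] using hn (x i) (hx i)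
    _ = c * ‖h‖ ^ 2 := by
        simp only [Finset.sum_const, Nat.card_Icc, add_tsub_cancel_right, nsmul_eq_mul]
        field_simp
    _ < ε := by
        rw [div_mul_eq_mul_div, div_lt_iff₀ (by positivity)]
        nlinarith

theorem half_mul_fderiv_log_mul_sqrt {E : Type*} [NormedAddCommGroup E] [NormedSpace ℝ E]
    {φ : E → ℝ} {θ : E} (hφ : ∀ᶠ ϑ in 𝓝 θ, 0 < φ ϑ)
    (hd : DifferentiableAt ℝ (fun ϑ => √(φ ϑ)) θ) (t : E) :
    1 / 2 * fderiv ℝ (fun ϑ => Real.log (φ ϑ)) θ t * √(φ θ) = fderiv ℝ (fun ϑ => √(φ ϑ)) θ t := by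
  have hpos : 0 < √(φ θ) := Real.sqrt_pos.2 hφ.self_of_nhds
  have hlog : (fun ϑ => Real.log (φ ϑ)) =ᶠ[𝓝 θ] fun ϑ => 2 * Real.log √(φ ϑ) := by
    filter_upwards [hφ] with ϑ hϑ
    rw [Real.log_sqrt hϑ.le]
    ring
  rw [hlog.fderiv_eq, ((hd.hasFDerivAt.log hpos.ne').const_mul 2).fderiv]
  simp only [smul_apply, smul_eq_mul]
  field_simp

theorem DqmFin_eq_sum_sq_sub_fderiv {p : ℕ} {Y : Type*} [Fintype Y]
    {f : (Fin p → ℝ) → ℝ → Y → ℝ} {θ : Fin p → ℝ} {x : ℝ}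
    (hpos : ∀ y, ∀ᶠ ϑ in 𝓝 θ, 0 < f ϑ x y)
    (hd : ∀ y, DifferentiableAt ℝ (fun ϑ => √(f ϑ x y)) θ) (t : Fin p → ℝ) :
    DqmFin f θ t x =
      ∑ y, (√(f (θ + t) x y) - √(f θ x y) - fderiv ℝ (fun ϑ => √(f ϑ x y)) θ t) ^ 2 := by
  unfold DqmFin scoreDir
  refine Finset.sum_congr rfl fun y _ => ?_
  rw [half_mul_fderiv_log_mul_sqrt (hpos y) (hd y)]

theorem isLittleO_DqmFin {p : ℕ} {Y : Type*} [Fintype Y] {f : (Fin p → ℝ) → ℝ → Y → ℝ}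
    {𝒳 : Set ℝ} {Θ₀ : Set (Fin p → ℝ)} (h𝒳 : IsCompact 𝒳)
    (hpos : ∀ θ ∈ Θ₀, ∀ x ∈ 𝒳, ∀ y, 0 < f θ x y)
    (hsmooth : ∀ y, ContDiffOn ℝ 1 (fun q : ℝ × (Fin p → ℝ) => √(f q.2 q.1 y)) (𝒳 ×ˢ Θ₀))
    {θ : Fin p → ℝ} (hθ : θ ∈ interior Θ₀) :
    (fun q : (Fin p → ℝ) × ℝ => DqmFin f θ q.1 q.2) =o[𝓝 0 ×ˢ 𝓟 𝒳] fun q => ‖q.1‖ ^ 2 := by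
  have hrem : ∀ y, (fun q : (Fin p → ℝ) × ℝ => (√(f (θ + q.1) q.2 y) - √(f θ q.2 y) -
      fderiv ℝ (fun ϑ => √(f ϑ q.2 y)) θ q.1) ^ 2) =o[𝓝 0 ×ˢ 𝓟 𝒳] fun q => ‖q.1‖ ^ 2 :=
    fun y => (isLittleO_sub_sub_fderiv_slice (g := fun ϑ x => √(f ϑ x y)) h𝒳 (hsmooth y)
      hθ).norm_right.pow two_pos
  refine (IsLittleO.fun_sum (s := Finset.univ) fun y _ => hrem y).congr' ?_ EventuallyEq.rfl
  rw [EventuallyEq, eventually_prod_principal_iff]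
  refine Eventually.of_forall fun t x hx => (DqmFin_eq_sum_sq_sub_fderiv (fun y => ?_)
    (fun y => (contDiffAt_slice (g := fun ϑ x => √(f ϑ x y)) (hsmooth y) hx hθ).differentiableAt
      one_ne_zero) t).symm
  filter_upwards [mem_interior_iff_mem_nhds.1 hθ] with ϑ hϑ using hpos ϑ hϑ x hx y

theorem stmt_4_general {p : ℕ} (Y : Type*) [Fintype Y]
    (f : (Fin p → ℝ) → ℝ → Y → ℝ)
    (𝒳 : Set ℝ) (Θ₀ : Set (Fin p → ℝ))
    (h𝒳c : IsCompact 𝒳)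
    (hpos : ∀ θ ∈ Θ₀, ∀ x ∈ 𝒳, ∀ y : Y, 0 < f θ x y)
    (hsmooth : ∀ y : Y,
      ContDiffOn ℝ 2 (fun q : ℝ × (Fin p → ℝ) => Real.sqrt (f q.2 q.1 y)) (𝒳 ×ˢ Θ₀))
    (x : ℕ → ℝ) (hx : ∀ i, x i ∈ 𝒳)
    (θ : Fin p → ℝ) (hθ : θ ∈ interior Θ₀) (h : Fin p → ℝ) :
    Tendsto (fun n : ℕ => ∑ i ∈ Finset.Icc 1 n, DqmFin f θ ((Real.sqrt n)⁻¹ • h) (x i))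
      atTop (nhds 0) :=
  tendsto_sum_Icc_inv_sqrt_smul
    (isLittleO_DqmFin h𝒳c hpos (fun y => (hsmooth y).of_le one_le_two) hθ) hx h

/-- For outcomes with finite support, compact `𝒳 ⊆ ℝ` and compact `Θ₀ ⊆ Θ ⊆ ℝ^p`,
positive densities, and `(x,θ) ↦ √f_θ(y|x)` twice continuously differentiable on
`𝒳 × Θ₀`, for any deterministic sequence `(x_i)` in `𝒳`, any `θ` in the interior of
`Θ₀` and any `h`, `∑_{i=1}^n D_{θ,h/√n}(x_i) → 0` as `n → ∞`. -/
theorem stmt_4 {p : ℕ} (Y : Type*) [Fintype Y] [Nonempty Y]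
    (f : (Fin p → ℝ) → ℝ → Y → ℝ)
    (𝒳 : Set ℝ) (Θ Θ₀ : Set (Fin p → ℝ)) (hΘ : Θ₀ ⊆ Θ)
    (h𝒳c : IsCompact 𝒳) (hΘ₀c : IsCompact Θ₀)
    (hdens : ∀ θ ∈ Θ₀, ∀ x ∈ 𝒳, ∑ y : Y, f θ x y = 1)
    (hpos : ∀ θ ∈ Θ₀, ∀ x ∈ 𝒳, ∀ y : Y, 0 < f θ x y)
    (hsmooth : ∀ y : Y,
      ContDiffOn ℝ 2 (fun q : ℝ × (Fin p → ℝ) => Real.sqrt (f q.2 q.1 y)) (𝒳 ×ˢ Θ₀))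
    (x : ℕ → ℝ) (hx : ∀ i, x i ∈ 𝒳)
    (θ : Fin p → ℝ) (hθ : θ ∈ interior Θ₀) (h : Fin p → ℝ) :
    Tendsto (fun n : ℕ => ∑ i ∈ Finset.Icc 1 n, DqmFin f θ ((Real.sqrt n)⁻¹ • h) (x i))
      atTop (nhds 0) :=
  stmt_4_general Y f 𝒳 Θ₀ h𝒳c hpos hsmooth x hx θ hθ h
end

section
/- Let H : ℝ → (0,1) be a continuous function with H(α+β) > 1/2, and for x ∈ [0,1] write H_x = H(α+βx). Then there exist ε ∈ (0, 1/2), m > 0, and η ∈ [0,1) such that, for the Markovian Langlie kernel with parameter ε, the function V(x) = mx + 1 satisfies the Lyapunov drift condition ∫₀¹ V(y) k(x, dy) − V(x) + 1 < 0 for all x ∈ (η, 1], where ∫₀¹ V(y) k(x, dy) = H_x · ε^{−1} ∫_{x/2}^{x/2+ε} (my+1) dy + (1−H_x) · ε^{−1} ∫_{(x+1)/2−ε}^{(x+1)/2} (my+1) dy. -/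
open MeasureTheory intervalIntegral

lemma intlin (m a b : ℝ) : (∫ y in a..b, (m * y + 1)) = m * (b ^ 2 - a ^ 2) / 2 + (b - a) := by
  have h1 : (∫ y in a..b, (m * y + 1)) =
      (∫ y in a..b, m * y) + ∫ y in a..b, (1 : ℝ) := by
    apply intervalIntegral.integral_add
    · exact ((continuous_const.mul continuous_id).intervalIntegrable a b)
    · exact intervalIntegrable_const
  rw [h1, intervalIntegral.integral_const_mul, integral_id]
  simp; ring

/-- Lyapunov drift condition for the Markovian Langlie kernel: if `H : ℝ → (0,1)` is
continuous with `H(α+β) > 1/2` and `H_x = H(α+βx)`, then there exist `ε ∈ (0,1/2)`,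
`m > 0` and `η ∈ [0,1)` such that `V(x) = mx + 1` satisfies
`∫₀¹ V(y) k(x,dy) − V(x) + 1 < 0` for all `x ∈ (η,1]`, where
`∫₀¹ V(y) k(x,dy) = H_x ε⁻¹ ∫_{x/2}^{x/2+ε} (my+1) dy
  + (1−H_x) ε⁻¹ ∫_{(x+1)/2−ε}^{(x+1)/2} (my+1) dy`. -/
theorem stmt_14 (H : ℝ → ℝ) (α β : ℝ) (hHcont : Continuous H)
    (hH01 : ∀ a : ℝ, H a ∈ Set.Ioo (0 : ℝ) 1) (hmed : 1 / 2 < H (α + β)) :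
    ∃ ε ∈ Set.Ioo (0 : ℝ) (1 / 2), ∃ m : ℝ, 0 < m ∧ ∃ η ∈ Set.Ico (0 : ℝ) 1,
      ∀ x ∈ Set.Ioc η 1,
        H (α + β * x) * ε⁻¹ * (∫ y in (x / 2)..(x / 2 + ε), (m * y + 1)) +
          (1 - H (α + β * x)) * ε⁻¹ *
            (∫ y in ((x + 1) / 2 - ε)..((x + 1) / 2), (m * y + 1)) -
          (m * x + 1) + 1 < 0 := by
  refine ⟨1/4, by norm_num, 32, by norm_num, ?_⟩
  -- continuity: φ x = H (α+βx) + x is continuous, φ 1 > 3/2 - 1/8 = 11/8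
  set φ : ℝ → ℝ := fun x => H (α + β * x) + x with hφ
  have hφc : Continuous φ := by
    exact (hHcont.comp (continuous_const.add (continuous_const.mul continuous_id))).add
      continuous_id
  have hφ1 : 11/8 < φ 1 := by
    have := hmed
    simp only [hφ, mul_one]
    linarith
  have hct : ContinuousAt φ 1 := hφc.continuousAt
  have := ContinuousAt.eventually_lt (f := fun _ => (11/8 : ℝ)) continuousAt_const hct (by simpa using hφ1)
  -- extract δ
  rw [Metric.eventually_nhds_iff] at this
  obtain ⟨δ, hδpos, hδ⟩ := this
  refine ⟨max 0 (1 - δ/2), ⟨le_max_left _ _, ?_⟩, ?_⟩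
  · rcases le_or_gt δ 2 with h | h
    · rw [max_lt_iff]; constructor <;> linarith
    · rw [max_lt_iff]; constructor <;> linarith
  · intro x hx
    obtain ⟨hx1, hx2⟩ := hx
    have hxδ : dist x 1 < δ := by
      rw [Real.dist_eq, abs_lt]
      have : 1 - δ/2 < x := lt_of_le_of_lt (le_max_right 0 (1 - δ/2)) hx1
      constructor <;> linarith
    have hkey : (11:ℝ)/8 < φ x := hδ hxδ
    have hH := hH01 (α + β * x)
    obtain ⟨hH0, hH1⟩ := hH
    simp only [hφ] at hkey
    rw [intlin, intlin]
    have hx38 : 3/8 < x := by linarith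
    nlinarith [hkey, hH1, hx2]
end
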